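/- arXiv:2507.14529 — 3 statements merged into one kernel-verified Lean document; each statement's English description precedes it below -/
import Mathlib

section
/- The soft Bellman operator T(Q)(x,a) := r(x,a) + β · ∑_{y∈X} log(∑_{b∈A} exp(Q(y,b))) · p(y|x,a) is a β-contraction on ℝ^{X×A} with respect to the sup-norm, for any β ∈ (0,1). -/
open Real Finset

private lemma lse_le {A : Type*} [Fintype A] [Nonempty A] (f g : A → ℝ) (c : ℝ)
    (h : ∀ b, f b - g b ≤ c) :
    Real.log (∑ b, Real.exp (f b)) - Real.log (∑ b, Real.exp (g b)) ≤ c := by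
  have hgpos : 0 < ∑ b, Real.exp (g b) :=
    Finset.sum_pos (fun b _ => Real.exp_pos _) Finset.univ_nonempty
  have hsum : ∑ b, Real.exp (f b) ≤ Real.exp c * ∑ b, Real.exp (g b) := by
    rw [Finset.mul_sum]
    refine Finset.sum_le_sum fun b _ => ?_
    rw [← Real.exp_add]
    exact Real.exp_le_exp.mpr (by linarith [h b])
  have := Real.log_le_log (Finset.sum_pos (fun b _ => Real.exp_pos _) Finset.univ_nonempty) hsum
  rw [Real.log_mul (Real.exp_ne_zero c) (ne_of_gt hgpos), Real.log_exp] at this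
  linarith

private lemma lse_lip {A : Type*} [Fintype A] [Nonempty A] (f g : A → ℝ) (c : ℝ)
    (h : ∀ b, |f b - g b| ≤ c) :
    |Real.log (∑ b, Real.exp (f b)) - Real.log (∑ b, Real.exp (g b))| ≤ c := by
  rw [abs_sub_le_iff]
  constructor
  · exact lse_le f g c fun b => (abs_sub_le_iff.mp (h b)).1
  · exact lse_le g f c fun b => (abs_sub_le_iff.mp (h b)).2

/-- The soft Bellman operator is a `β`-contraction on `ℝ^{X×A}` w.r.t. the sup-norm. -/
theorem softBellman_contraction {X A : Type*} [Fintype X] [Fintype A] [Nonempty X] [Nonempty A]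
    (r : X → A → ℝ) (p : X → A → X → ℝ)
    (hp0 : ∀ x a y, 0 ≤ p x a y) (hp1 : ∀ x a, ∑ y, p x a y = 1)
    (β : ℝ) (hβ0 : 0 < β) (hβ1 : β < 1)
    (T : (X → A → ℝ) → (X → A → ℝ))
    (hT : ∀ Q x a, T Q x a =
      r x a + β * ∑ y, Real.log (∑ b, Real.exp (Q y b)) * p x a y) :
    ∀ Q₁ Q₂ : X → A → ℝ, ‖T Q₁ - T Q₂‖ ≤ β * ‖Q₁ - Q₂‖ := by
  intro Q₁ Q₂
  set c := ‖Q₁ - Q₂‖ with hc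
  have hcnn : 0 ≤ c := norm_nonneg _
  have hQ : ∀ y b, |Q₁ y b - Q₂ y b| ≤ c := by
    intro y b
    have h1 : ‖(Q₁ - Q₂) y‖ ≤ c := norm_le_pi_norm (Q₁ - Q₂) y
    have h2 : ‖(Q₁ - Q₂) y b‖ ≤ ‖(Q₁ - Q₂) y‖ := norm_le_pi_norm ((Q₁ - Q₂) y) b
    simpa using h2.trans h1
  have key : ∀ x a, |T Q₁ x a - T Q₂ x a| ≤ β * c := by
    intro x a
    rw [hT, hT]
    have : r x a + β * (∑ y, Real.log (∑ b, Real.exp (Q₁ y b)) * p x a y)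
        - (r x a + β * (∑ y, Real.log (∑ b, Real.exp (Q₂ y b)) * p x a y))
        = β * ∑ y, (Real.log (∑ b, Real.exp (Q₁ y b))
          - Real.log (∑ b, Real.exp (Q₂ y b))) * p x a y := by
      simp only [sub_mul, Finset.sum_sub_distrib]
      ring
    rw [this, abs_mul, abs_of_pos hβ0]
    refine mul_le_mul_of_nonneg_left ?_ hβ0.le
    calc |∑ y, (Real.log (∑ b, Real.exp (Q₁ y b)) - Real.log (∑ b, Real.exp (Q₂ y b))) * p x a y|
        ≤ ∑ y, |(Real.log (∑ b, Real.exp (Q₁ y b)) - Real.log (∑ b, Real.exp (Q₂ y b))) * p x a y| :=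
          Finset.abs_sum_le_sum_abs _ _
      _ ≤ ∑ y, c * p x a y := by
          refine Finset.sum_le_sum fun y _ => ?_
          rw [abs_mul, abs_of_nonneg (hp0 x a y)]
          exact mul_le_mul_of_nonneg_right (lse_lip _ _ c (hQ y)) (hp0 x a y)
      _ = c := by rw [← Finset.mul_sum, hp1, mul_one]
  rw [show T Q₁ - T Q₂ = fun x => (T Q₁ x - T Q₂ x) from rfl]
  refine pi_norm_le_iff_of_nonneg (by positivity) |>.mpr fun x => ?_
  refine pi_norm_le_iff_of_nonneg (by positivity) |>.mpr fun a => ?_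
  simpa using key x a
end

section
/- The softmax policy map is 1-Lipschitz in the Euclidean norm: for vectors q_1, q_2 : A → ℝ on a finite set A, the softmax distributions π_i(a) = exp(q_i(a))/∑_b exp(q_i(b)) satisfy ‖π_1 − π_2‖_2 ≤ ‖q_1 − q_2‖_2. -/
open Finset Real

lemma softmax_cov_bound {A : Type*} [Fintype A] (p u v : A → ℝ)
    (hp : ∀ a, 0 ≤ p a) (hsum : ∑ a, p a = 1) :
    |∑ a, p a * u a * v a - (∑ a, p a * u a) * (∑ a, p a * v a)|
      ≤ Real.sqrt (∑ a, u a ^ 2) * Real.sqrt (∑ a, v a ^ 2) := by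
  set mu := ∑ a, p a * u a with hmu
  set mv := ∑ a, p a * v a with hmv
  have hp1 : ∀ a, p a ≤ 1 := by
    intro a
    calc p a ≤ ∑ b, p b := Finset.single_le_sum (fun b _ => hp b) (Finset.mem_univ a)
    _ = 1 := hsum
  have key : ∑ a, p a * u a * v a - mu * mv
      = ∑ a, (Real.sqrt (p a) * (u a - mu)) * (Real.sqrt (p a) * (v a - mv)) := by
    have h : ∀ a, (Real.sqrt (p a) * (u a - mu)) * (Real.sqrt (p a) * (v a - mv))
        = p a * u a * v a - p a * u a * mv - p a * v a * mu + p a * (mu * mv) := by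
      intro a
      have hs : Real.sqrt (p a) * Real.sqrt (p a) = p a := Real.mul_self_sqrt (hp a)
      rw [show Real.sqrt (p a) * (u a - mu) * (Real.sqrt (p a) * (v a - mv))
          = (Real.sqrt (p a) * Real.sqrt (p a)) * ((u a - mu) * (v a - mv)) by ring, hs]
      ring
    rw [Finset.sum_congr rfl (fun a _ => h a)]
    simp only [Finset.sum_add_distrib, Finset.sum_sub_distrib, ← Finset.sum_mul, ← hmu, ← hmv]
    rw [hsum]
    ring
  -- variance bounds
  have hvar : ∀ (w : A → ℝ), ∑ a, (Real.sqrt (p a) * (w a - ∑ b, p b * w b)) ^ 2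
      ≤ ∑ a, w a ^ 2 := by
    intro w
    set mw := ∑ b, p b * w b with hmw
    have expand : ∀ a, (Real.sqrt (p a) * (w a - mw)) ^ 2
        = p a * w a ^ 2 - 2 * (p a * w a) * mw + p a * mw ^ 2 := by
      intro a
      have hs : Real.sqrt (p a) ^ 2 = p a := Real.sq_sqrt (hp a)
      rw [mul_pow, hs]; ring
    rw [Finset.sum_congr rfl (fun a _ => expand a)]
    have h1 : ∑ a, (p a * w a ^ 2 - 2 * (p a * w a) * mw + p a * mw ^ 2)
        = (∑ a, p a * w a ^ 2) - mw ^ 2 := by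
      rw [Finset.sum_add_distrib, Finset.sum_sub_distrib]
      have e1 : ∑ a, 2 * (p a * w a) * mw = 2 * mw * mw := by
        rw [show (2:ℝ) * mw * mw = (∑ a, p a * w a) * (2 * mw) from by rw [← hmw]; ring,
          Finset.sum_mul]
        exact Finset.sum_congr rfl fun a _ => by ring
      have e2 : ∑ a, p a * mw ^ 2 = mw ^ 2 := by rw [← Finset.sum_mul, hsum, one_mul]
      rw [e1, e2]; ring
    rw [h1]
    have h2 : ∑ a, p a * w a ^ 2 ≤ ∑ a, w a ^ 2 := by
      apply Finset.sum_le_sum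
      intro a _
      nlinarith [sq_nonneg (w a), hp1 a, hp a]
    nlinarith [sq_nonneg mw]
  rw [key]
  have cs := Finset.sum_mul_sq_le_sq_mul_sq Finset.univ
    (fun a => Real.sqrt (p a) * (u a - mu)) (fun a => Real.sqrt (p a) * (v a - mv))
  have habs : |∑ a, (Real.sqrt (p a) * (u a - mu)) * (Real.sqrt (p a) * (v a - mv))|
      ≤ Real.sqrt (∑ a, (Real.sqrt (p a) * (u a - mu)) ^ 2)
        * Real.sqrt (∑ a, (Real.sqrt (p a) * (v a - mv)) ^ 2) := by
    rw [← Real.sqrt_sq_eq_abs, ← Real.sqrt_mul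
      (Finset.sum_nonneg fun a _ => sq_nonneg _)]
    exact Real.sqrt_le_sqrt cs
  refine habs.trans ?_
  apply mul_le_mul (Real.sqrt_le_sqrt (hvar u)) (Real.sqrt_le_sqrt (hvar v))
    (Real.sqrt_nonneg _) (Real.sqrt_nonneg _)

lemma softmax_deriv {A : Type*} [Fintype A] [Nonempty A] (q₂ d u : A → ℝ) (t : ℝ)
    (hSpos : ∀ s : ℝ, 0 < ∑ b, Real.exp (q₂ b + s * d b)) :
    HasDerivAt (fun s : ℝ => ∑ a, u a * (Real.exp (q₂ a + s * d a) / ∑ b, Real.exp (q₂ b + s * d b)))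
      ((∑ a, (Real.exp (q₂ a + t * d a) / ∑ b, Real.exp (q₂ b + t * d b)) * u a * d a)
        - (∑ a, (Real.exp (q₂ a + t * d a) / ∑ b, Real.exp (q₂ b + t * d b)) * u a)
          * (∑ a, (Real.exp (q₂ a + t * d a) / ∑ b, Real.exp (q₂ b + t * d b)) * d a)) t := by
  have hE : ∀ a, HasDerivAt (fun s : ℝ => Real.exp (q₂ a + s * d a))
      (Real.exp (q₂ a + t * d a) * (1 * d a)) t := fun a =>
    (((hasDerivAt_id t).mul_const (d a)).const_add (q₂ a)).exp
  have hS : HasDerivAt (fun s : ℝ => ∑ b, Real.exp (q₂ b + s * d b))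
      (∑ b, Real.exp (q₂ b + t * d b) * (1 * d b)) t := HasDerivAt.fun_sum (fun b _ => hE b)
  have h := HasDerivAt.fun_sum (fun a (_ : a ∈ Finset.univ) =>
    (((hE a).div hS (hSpos t).ne').const_mul (u a)))
  convert h using 1
  case e'_4 => rfl
  case e'_5 => rfl
  case e'_8 => rfl
  have hS0 : (∑ b, Real.exp (q₂ b + t * d b)) ≠ 0 := (hSpos t).ne'
  rw [Finset.sum_mul, ← Finset.sum_sub_distrib]
  apply Finset.sum_congr rfl
  intro a _
  have hm : ∀ c : A → ℝ, ∑ b, (Real.exp (q₂ b + t * d b) / ∑ x, Real.exp (q₂ x + t * d x)) * c b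
      = (∑ b, Real.exp (q₂ b + t * d b) * c b) / (∑ x, Real.exp (q₂ x + t * d x)) := by
    intro c
    rw [Finset.sum_div]
    exact Finset.sum_congr rfl fun b _ => by rw [div_mul_eq_mul_div]
  rw [hm]
  field_simp

/-- The softmax policy map is 1-Lipschitz in the Euclidean norm. -/
theorem softmax_lipschitz_euclidean {A : Type*} [Fintype A] [Nonempty A] (q₁ q₂ : A → ℝ) :
    Real.sqrt (∑ a, (Real.exp (q₁ a) / ∑ b, Real.exp (q₁ b)
        - Real.exp (q₂ a) / ∑ b, Real.exp (q₂ b)) ^ 2)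
      ≤ Real.sqrt (∑ a, (q₁ a - q₂ a) ^ 2) := by
  classical
  let d : A → ℝ := fun a => q₁ a - q₂ a
  let u : A → ℝ := fun a => Real.exp (q₁ a) / (∑ b, Real.exp (q₁ b))
    - Real.exp (q₂ a) / (∑ b, Real.exp (q₂ b))
  have hSpos : ∀ s : ℝ, 0 < ∑ b, Real.exp (q₂ b + s * d b) := fun s =>
    Finset.sum_pos (fun b _ => Real.exp_pos _) Finset.univ_nonempty
  set φ : ℝ → ℝ := fun s => ∑ a, u a * (Real.exp (q₂ a + s * d a)
    / ∑ b, Real.exp (q₂ b + s * d b)) with hφ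
  set C : ℝ := Real.sqrt (∑ a, u a ^ 2) * Real.sqrt (∑ a, d a ^ 2) with hC
  set f' : ℝ → ℝ := fun t =>
    (∑ a, (Real.exp (q₂ a + t * d a) / ∑ b, Real.exp (q₂ b + t * d b)) * u a * d a)
      - (∑ a, (Real.exp (q₂ a + t * d a) / ∑ b, Real.exp (q₂ b + t * d b)) * u a)
        * (∑ a, (Real.exp (q₂ a + t * d a) / ∑ b, Real.exp (q₂ b + t * d b)) * d a) with hf'
  have hderiv : ∀ t : ℝ, HasDerivAt φ (f' t) t := fun t => softmax_deriv q₂ d u t hSpos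
  have hbound : ∀ t : ℝ, |f' t| ≤ C := by
    intro t
    have hp : ∀ a, 0 ≤ Real.exp (q₂ a + t * d a) / ∑ b, Real.exp (q₂ b + t * d b) :=
      fun a => div_nonneg (Real.exp_pos _).le (hSpos t).le
    have hsum1 : ∑ a, Real.exp (q₂ a + t * d a) / (∑ b, Real.exp (q₂ b + t * d b)) = 1 := by
      rw [← Finset.sum_div, div_self (hSpos t).ne']
    exact softmax_cov_bound _ u d hp hsum1
  have hmvt := norm_image_sub_le_of_norm_deriv_le_segment'
    (f := φ) (f' := f') (a := 0) (b := 1) (C := C)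
    (fun x _ => (hderiv x).hasDerivWithinAt)
    (fun x _ => hbound x) 1 (Set.mem_Icc.2 ⟨zero_le_one, le_refl 1⟩)
  have hφ1 : φ 1 = ∑ a, u a * (Real.exp (q₁ a) / ∑ b, Real.exp (q₁ b)) := by
    simp only [hφ]
    congr 1
    funext a
    have h1 : ∀ c : A, q₂ c + 1 * d c = q₁ c := fun c => by simp [d]
    simp only [h1]
  have hφ0 : φ 0 = ∑ a, u a * (Real.exp (q₂ a) / ∑ b, Real.exp (q₂ b)) := by
    simp only [hφ]
    congr 1
    funext a
    have h0 : ∀ c : A, q₂ c + 0 * d c = q₂ c := fun c => by simp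
    simp only [h0]
  have hdiff : φ 1 - φ 0 = ∑ a, u a ^ 2 := by
    rw [hφ1, hφ0, ← Finset.sum_sub_distrib]
    exact Finset.sum_congr rfl fun a _ => by simp only [u]; ring
  have hmain : ∑ a, u a ^ 2 ≤ C := by
    have := hmvt
    rw [Real.norm_eq_abs, hdiff] at this
    calc ∑ a, u a ^ 2 ≤ |∑ a, u a ^ 2| := le_abs_self _
      _ ≤ C * (1 - 0) := this
      _ = C := by ring
  show Real.sqrt (∑ a, u a ^ 2) ≤ Real.sqrt (∑ a, d a ^ 2)
  have hu0 : 0 ≤ ∑ a, u a ^ 2 := Finset.sum_nonneg fun a _ => sq_nonneg _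
  rcases eq_or_lt_of_le (Real.sqrt_nonneg (∑ a, u a ^ 2)) with h | h
  · rw [← h]; exact Real.sqrt_nonneg _
  · have hsq : Real.sqrt (∑ a, u a ^ 2) * Real.sqrt (∑ a, u a ^ 2) = ∑ a, u a ^ 2 :=
      Real.mul_self_sqrt hu0
    have : Real.sqrt (∑ a, u a ^ 2) * Real.sqrt (∑ a, u a ^ 2)
        ≤ Real.sqrt (∑ a, u a ^ 2) * Real.sqrt (∑ a, d a ^ 2) := by
      rw [hsq]; exact hmain
    exact le_of_mul_le_mul_left this h
end

section
/- Let X, A be finite, p a transition kernel, β ∈ (0,1), and r_θ(x,a) := ⟨θ, f(x,a)⟩ a reward linear in a parameter θ from a Hilbert space H, where f : X × A → H is bounded with K := max_{(x,a)} ‖f(x,a)‖_H. If Q^{θ_i} denotes the fixed point of the soft Bellman operator with reward r_{θ_i}, then ‖Q^{θ_1} − Q^{θ_2}‖_∞ ≤ (K/(1−β)) ‖θ_1 − θ_2‖_H. -/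
lemma lse_key {A : Type*} [Fintype A] [Nonempty A] (u v : A → ℝ) (M : ℝ)
    (h : ∀ b, u b - v b ≤ M) :
    Real.log (∑ b, Real.exp (u b)) - Real.log (∑ b, Real.exp (v b)) ≤ M := by
  have hpos : ∀ (w : A → ℝ), 0 < ∑ b, Real.exp (w b) := fun w =>
    Finset.sum_pos (fun b _ => Real.exp_pos _) Finset.univ_nonempty
  have hsum : ∑ b, Real.exp (u b) ≤ Real.exp M * ∑ b, Real.exp (v b) := by
    rw [Finset.mul_sum]
    refine Finset.sum_le_sum fun b _ => ?_
    rw [← Real.exp_add]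
    exact Real.exp_le_exp.2 (by linarith [h b])
  have := Real.log_le_log (hpos u) hsum
  rw [Real.log_mul (Real.exp_ne_zero M) (ne_of_gt (hpos v)), Real.log_exp] at this
  linarith

lemma lse_lipschitz {A : Type*} [Fintype A] [Nonempty A] (u v : A → ℝ) (M : ℝ)
    (h : ∀ b, |u b - v b| ≤ M) :
    |Real.log (∑ b, Real.exp (u b)) - Real.log (∑ b, Real.exp (v b))| ≤ M := by
  rw [abs_le]
  constructor
  · have := lse_key v u M (fun b => by
      have := h b; rw [abs_le] at this; linarith)
    linarith
  · exact lse_key u v M (fun b => (le_abs_self _).trans (h b))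

/-- For rewards linear in a Hilbert-space parameter, the soft Bellman fixed points are
Lipschitz in the parameter: `‖Q^{θ₁} − Q^{θ₂}‖_∞ ≤ (K/(1−β))‖θ₁ − θ₂‖`. -/
theorem softBellman_fixedPoint_param_lipschitz {X A : Type*} [Fintype X] [Fintype A]
    [Nonempty X] [Nonempty A]
    {H : Type*} [NormedAddCommGroup H] [InnerProductSpace ℝ H]
    (p : X → A → X → ℝ) (hp0 : ∀ x a y, 0 ≤ p x a y) (hp1 : ∀ x a, ∑ y, p x a y = 1)
    (β : ℝ) (hβ0 : 0 < β) (hβ1 : β < 1)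
    (f : X → A → H) (K : ℝ) (hK : ∀ x a, ‖f x a‖ ≤ K)
    (θ₁ θ₂ : H) (Q₁ Q₂ : X → A → ℝ)
    (hQ₁ : ∀ x a, Q₁ x a = (inner ℝ θ₁ (f x a) : ℝ)
      + β * ∑ y, Real.log (∑ b, Real.exp (Q₁ y b)) * p x a y)
    (hQ₂ : ∀ x a, Q₂ x a = (inner ℝ θ₂ (f x a) : ℝ)
      + β * ∑ y, Real.log (∑ b, Real.exp (Q₂ y b)) * p x a y) :
    ‖Q₁ - Q₂‖ ≤ (K / (1 - β)) * ‖θ₁ - θ₂‖ := by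
  set d := ‖Q₁ - Q₂‖ with hd
  have hd0 : 0 ≤ d := norm_nonneg _
  have hK0 : 0 ≤ K :=
    le_trans (norm_nonneg _) (hK (Classical.arbitrary X) (Classical.arbitrary A))
  have hmem : ∀ y b, |Q₁ y b - Q₂ y b| ≤ d := by
    intro y b
    calc |Q₁ y b - Q₂ y b| = ‖(Q₁ - Q₂) y b‖ := by simp [Real.norm_eq_abs]
      _ ≤ ‖(Q₁ - Q₂) y‖ := norm_le_pi_norm _ b
      _ ≤ d := norm_le_pi_norm _ y
  have hptwise : ∀ x a, |Q₁ x a - Q₂ x a| ≤ K * ‖θ₁ - θ₂‖ + β * d := by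
    intro x a
    have heq : Q₁ x a - Q₂ x a = (inner ℝ (θ₁ - θ₂) (f x a) : ℝ)
        + β * ∑ y, (Real.log (∑ b, Real.exp (Q₁ y b))
          - Real.log (∑ b, Real.exp (Q₂ y b))) * p x a y := by
      rw [hQ₁ x a, hQ₂ x a, inner_sub_left]
      simp only [sub_mul, Finset.sum_sub_distrib]
      ring
    rw [heq]
    have h1 : |(inner ℝ (θ₁ - θ₂) (f x a) : ℝ)| ≤ ‖θ₁ - θ₂‖ * ‖f x a‖ :=
      abs_real_inner_le_norm _ _
    have h2 : |∑ y, (Real.log (∑ b, Real.exp (Q₁ y b))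
        - Real.log (∑ b, Real.exp (Q₂ y b))) * p x a y| ≤ d := by
      calc |∑ y, (Real.log (∑ b, Real.exp (Q₁ y b))
            - Real.log (∑ b, Real.exp (Q₂ y b))) * p x a y|
          ≤ ∑ y, |(Real.log (∑ b, Real.exp (Q₁ y b))
            - Real.log (∑ b, Real.exp (Q₂ y b))) * p x a y| :=
            Finset.abs_sum_le_sum_abs _ _
        _ ≤ ∑ y, d * p x a y := by
            refine Finset.sum_le_sum fun y _ => ?_
            rw [abs_mul, abs_of_nonneg (hp0 x a y)]
            exact mul_le_mul_of_nonneg_right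
              (lse_lipschitz _ _ d (fun b => hmem y b)) (hp0 x a y)
        _ = d := by rw [← Finset.mul_sum, hp1 x a, mul_one]
    calc |(inner ℝ (θ₁ - θ₂) (f x a) : ℝ)
          + β * ∑ y, (Real.log (∑ b, Real.exp (Q₁ y b))
            - Real.log (∑ b, Real.exp (Q₂ y b))) * p x a y|
        ≤ |(inner ℝ (θ₁ - θ₂) (f x a) : ℝ)|
          + |β * ∑ y, (Real.log (∑ b, Real.exp (Q₁ y b))
            - Real.log (∑ b, Real.exp (Q₂ y b))) * p x a y| := abs_add_le _ _
      _ ≤ ‖θ₁ - θ₂‖ * ‖f x a‖ + β * d := by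
          rw [abs_mul, abs_of_pos hβ0]
          exact add_le_add h1 (mul_le_mul_of_nonneg_left h2 (le_of_lt hβ0))
      _ ≤ K * ‖θ₁ - θ₂‖ + β * d := by
          have := mul_le_mul_of_nonneg_left (hK x a) (norm_nonneg (θ₁ - θ₂))
          linarith [this]
  have hbound : d ≤ K * ‖θ₁ - θ₂‖ + β * d := by
    rw [hd]
    refine (pi_norm_le_iff_of_nonneg (by positivity)).2 fun x => ?_
    refine (pi_norm_le_iff_of_nonneg (by positivity)).2 fun a => ?_
    simpa [Real.norm_eq_abs] using hptwise x a
  have h1β : 0 < 1 - β := by linarith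
  rw [div_mul_eq_mul_div, le_div_iff₀ h1β]
  nlinarith [hbound]
end
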